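/- arXiv:2511.21763 — 2 statements merged into one kernel-verified Lean document; each statement's English description precedes it below -/
import Mathlib

section
/- Let b ∈ L¹((0,1]) be nonnegative a.e., p:[0,1]→(1,∞) with 1 < p⁻ ≤ p(t) ≤ p⁺ < ∞, and 0 ≤ α < β ≤ 1, η₀ ∈ (0,1]. Suppose u:[0,1]→[0,∞) is continuous, satisfies min_{t∈[α,β]} u(t) ≥ η₀ ‖u‖_∞, and ∫₀¹ b(1−s) u(s)^{p(s)} ds = ρ for some ρ > 0. Then ‖u‖_{L^{p(·)}} ≥ η₀ (β−α)^{1/p⁻} · [(ρ/B)^{1/p⁺} + ε₁], where B := ∫₀¹ b(s) ds and ε₁ := (ρ/B)^{1/p⁻} − (ρ/B)^{1/p⁺} if ρ/B < 1 and ε₁ := 0 if ρ/B ≥ 1. -/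
open MeasureTheory Set

/-- Luxemburg norm on [0,1] with variable exponent `p`. -/
noncomputable def luxNorm (p u : ℝ → ℝ) : ℝ :=
  sInf {δ : ℝ | 0 < δ ∧ (∫ x in (0:ℝ)..1, (|u x| / δ) ^ (p x)) ≤ 1}

/-- Supremum norm on [0,1]. -/
noncomputable def supNorm (u : ℝ → ℝ) : ℝ :=
  sSup ((fun t => |u t|) '' Set.Icc (0:ℝ) 1)

/-!
On `[α, β]` we have `|u| ≥ c := η₀ ‖u‖_∞`, so for every `δ` admissible in the Luxemburg
infimum with `δ < c` the modular is at least `(β - α) (c / δ) ^ p⁻`; as it is at most `1`, this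
forces `δ ≥ (β - α) ^ (1 / p⁻) c`. On the other hand, after the substitution `s ↦ 1 - s`,
`ρ ≤ B · max (‖u‖_∞ ^ p⁻, ‖u‖_∞ ^ p⁺)`, and the bracket in the claim is the inverse of
`t ↦ max (t ^ p⁻, t ^ p⁺)` evaluated at `ρ / B`, hence at most `‖u‖_∞`.
-/

namespace Real

lemma rpow_le_max_rpow {t r a b : ℝ} (ht : 0 ≤ t) (ha : 0 < a) (har : a ≤ r) (hrb : r ≤ b) :
    t ^ r ≤ max (t ^ a) (t ^ b) := by
  rcases le_total t 1 with h | h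
  · exact le_max_of_le_left (rpow_le_rpow_of_exponent_ge' ht h ha.le har)
  · exact le_max_of_le_right (rpow_le_rpow_of_exponent_le h hrb)

lemma rpow_le_max_rpow_of_abs_le {x M r a b : ℝ} (hxM : |x| ≤ M) (ha : 0 < a) (har : a ≤ r)
    (hrb : r ≤ b) : x ^ r ≤ max (M ^ a) (M ^ b) :=
  calc x ^ r ≤ |x| ^ r := (le_abs_self _).trans (abs_rpow_le_abs_rpow x r)
    _ ≤ M ^ r := rpow_le_rpow (abs_nonneg x) hxM (ha.le.trans har)
    _ ≤ max (M ^ a) (M ^ b) := rpow_le_max_rpow ((abs_nonneg x).trans hxM) ha har hrb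

lemma ite_rpow_one_div_le_of_le_max_rpow {q M a b : ℝ} (hq : 0 < q) (hM : 0 ≤ M) (ha : 0 < a)
    (hab : a ≤ b) (h : q ≤ max (M ^ a) (M ^ b)) :
    (if q < 1 then q ^ (1 / a) else q ^ (1 / b)) ≤ M := by
  have hb : 0 < b := ha.trans_le hab
  have hinv : 1 / b ≤ 1 / a := one_div_le_one_div_of_le ha hab
  have root_le {c : ℝ} (hc : 0 < c) (hqc : q ≤ M ^ c) : q ^ (1 / c) ≤ M := by
    rw [one_div, rpow_inv_le_iff_of_pos hq.le hM hc]
    exact hqc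
  rcases le_max_iff.mp h with hqa | hqb
  · split_ifs with hq1
    · exact root_le ha hqa
    · exact (rpow_le_rpow_of_exponent_le (not_lt.mp hq1) hinv).trans (root_le ha hqa)
  · split_ifs with hq1
    · exact (rpow_le_rpow_of_exponent_ge hq hq1.le hinv).trans (root_le hb hqb)
    · exact root_le hb hqb

end Real

lemma intervalIntegral_mul_le_mul_integral {w f : ℝ → ℝ} {a b K : ℝ} (hab : a ≤ b)
    (hw : IntegrableOn w (Ioc a b)) (hw0 : ∀ᵐ x ∂volume.restrict (Ioc a b), 0 ≤ w x)
    (hwf : IntervalIntegrable (fun x => w x * f x) volume a b) (hf : ∀ x ∈ Ioc a b, f x ≤ K) :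
    ∫ x in a..b, w x * f x ≤ K * ∫ x in a..b, w x := by
  rw [← intervalIntegral.integral_const_mul, intervalIntegral.integral_of_le hab,
    intervalIntegral.integral_of_le hab]
  refine setIntegral_mono_ae_restrict hwf.1 (hw.const_mul K) ?_
  filter_upwards [hw0, ae_restrict_mem measurableSet_Ioc] with x hx0 hx
  rw [mul_comm K]
  exact mul_le_mul_of_nonneg_left (hf x hx) hx0

section VariableExponent

variable {p u : ℝ → ℝ} {pm pp : ℝ}

lemma abs_le_supNorm (hu : ContinuousOn u (Icc 0 1)) {x : ℝ} (hx : x ∈ Icc 0 1) :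
    |u x| ≤ supNorm u :=
  le_csSup (isCompact_Icc.image_of_continuousOn hu.abs).bddAbove ⟨x, hx, rfl⟩

lemma supNorm_nonneg (u : ℝ → ℝ) : 0 ≤ supNorm u :=
  Real.sSup_nonneg (by rintro _ ⟨t, -, rfl⟩; exact abs_nonneg _)

lemma integral_comp_one_sub_mul_rpow_le {b : ℝ → ℝ} (hb : IntegrableOn b (Ioc 0 1))
    (hbnn : ∀ᵐ s ∂volume.restrict (Ioc 0 1), 0 ≤ b s) (hu : ContinuousOn u (Icc 0 1))
    (hpm : 0 < pm) (hpl : ∀ t ∈ Icc (0:ℝ) 1, pm ≤ p t) (hpu : ∀ t ∈ Icc (0:ℝ) 1, p t ≤ pp)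
    (hint : IntervalIntegrable (fun s => b (1 - s) * u s ^ p s) volume 0 1) :
    ∫ s in (0:ℝ)..1, b (1 - s) * u s ^ p s ≤
      max (supNorm u ^ pm) (supNorm u ^ pp) * ∫ s in (0:ℝ)..1, b s := by
  have hrefl : ∫ s in (0:ℝ)..1, b (1 - s) * u s ^ p s =
      ∫ s in (0:ℝ)..1, b s * u (1 - s) ^ p (1 - s) := by
    simpa using intervalIntegral.integral_comp_sub_left
      (fun s => b s * u (1 - s) ^ p (1 - s)) (a := 0) (b := 1) 1
  rw [hrefl]
  refine intervalIntegral_mul_le_mul_integral zero_le_one hb hbnn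
    (by simpa using (hint.comp_sub_left 1).symm) fun s hs => ?_
  have hs' : 1 - s ∈ Icc (0:ℝ) 1 := ⟨by linarith [hs.2], by linarith [hs.1]⟩
  exact Real.rpow_le_max_rpow_of_abs_le (abs_le_supNorm hu hs') hpm (hpl _ hs') (hpu _ hs')

lemma integrableOn_abs_div_rpow (hu : ContinuousOn u (Icc 0 1)) (hp : Measurable p)
    (hpm : 0 < pm) (hpl : ∀ t ∈ Icc (0:ℝ) 1, pm ≤ p t) (hpu : ∀ t ∈ Icc (0:ℝ) 1, p t ≤ pp)
    {δ : ℝ} (hδ : 0 < δ) : IntegrableOn (fun x => (|u x| / δ) ^ p x) (Ioc 0 1) := by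
  have hmeas : AEMeasurable u (volume.restrict (Ioc 0 1)) :=
    (hu.aemeasurable measurableSet_Icc).mono_measure
      (Measure.restrict_mono Ioc_subset_Icc_self le_rfl)
  refine Integrable.mono' (integrableOn_const (C := max ((supNorm u / δ) ^ pm)
    ((supNorm u / δ) ^ pp)) measure_Ioc_lt_top.ne)
    ((hmeas.abs.div_const δ).pow hp.aemeasurable).aestronglyMeasurable ?_
  filter_upwards [ae_restrict_mem measurableSet_Ioc] with x hx
  have hx : x ∈ Icc (0:ℝ) 1 := Ioc_subset_Icc_self hx
  rw [Real.norm_eq_abs, abs_of_nonneg (by positivity)]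
  refine Real.rpow_le_max_rpow_of_abs_le ?_ hpm (hpl x hx) (hpu x hx)
  rw [abs_div, abs_abs, abs_of_pos hδ]
  exact div_le_div_of_nonneg_right (abs_le_supNorm hu hx) hδ.le

lemma integral_abs_div_supNorm_add_one_rpow_le_one (hu : ContinuousOn u (Icc 0 1))
    (hp : Measurable p) (hpm : 0 < pm) (hpl : ∀ t ∈ Icc (0:ℝ) 1, pm ≤ p t)
    (hpu : ∀ t ∈ Icc (0:ℝ) 1, p t ≤ pp) :
    ∫ x in (0:ℝ)..1, (|u x| / (supNorm u + 1)) ^ p x ≤ 1 := by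
  have hM : 0 < supNorm u + 1 := by linarith [supNorm_nonneg u]
  calc ∫ x in (0:ℝ)..1, (|u x| / (supNorm u + 1)) ^ p x ≤ ∫ _ in (0:ℝ)..1, (1:ℝ) := by
        refine intervalIntegral.integral_mono_on zero_le_one
          ((intervalIntegrable_iff_integrableOn_Ioc_of_le zero_le_one).2
            (integrableOn_abs_div_rpow hu hp hpm hpl hpu hM)) intervalIntegrable_const ?_
        intro x hx
        refine Real.rpow_le_one (by positivity) ?_ (hpm.le.trans (hpl x hx))
        rw [div_le_one hM]
        linarith [abs_le_supNorm hu hx]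
    _ = 1 := by simp

lemma sub_mul_rpow_le_integral {α β c δ : ℝ} (hα : 0 ≤ α) (hβ : β ≤ 1) (hαβ : α ≤ β)
    (hpm : 0 ≤ pm) (hpl : ∀ t ∈ Icc α β, pm ≤ p t) (hc : ∀ t ∈ Icc α β, c ≤ |u t|)
    (hδ : 0 < δ) (hδc : δ ≤ c) (hint : IntegrableOn (fun x => (|u x| / δ) ^ p x) (Ioc 0 1)) :
    (β - α) * (c / δ) ^ pm ≤ ∫ x in (0:ℝ)..1, (|u x| / δ) ^ p x := by
  have hcδ : 1 ≤ c / δ := (one_le_div hδ).mpr hδc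
  have hpoint : ∀ x ∈ Ioc α β, (c / δ) ^ pm ≤ (|u x| / δ) ^ p x := by
    intro x hx
    have hx : x ∈ Icc α β := Ioc_subset_Icc_self hx
    calc (c / δ) ^ pm ≤ (c / δ) ^ p x := Real.rpow_le_rpow_of_exponent_le hcδ (hpl x hx)
      _ ≤ (|u x| / δ) ^ p x :=
        Real.rpow_le_rpow (by linarith) (div_le_div_of_nonneg_right (hc x hx) hδ.le)
          (hpm.trans (hpl x hx))
  calc (β - α) * (c / δ) ^ pm = ∫ _ in Ioc α β, (c / δ) ^ pm := by
        rw [setIntegral_const, measureReal_def, Real.volume_Ioc,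
          ENNReal.toReal_ofReal (sub_nonneg.mpr hαβ), smul_eq_mul]
    _ ≤ ∫ x in Ioc α β, (|u x| / δ) ^ p x :=
        setIntegral_mono_on (integrableOn_const measure_Ioc_lt_top.ne)
          (hint.mono_set (Ioc_subset_Ioc hα hβ)) measurableSet_Ioc hpoint
    _ ≤ ∫ x in Ioc 0 1, (|u x| / δ) ^ p x :=
        setIntegral_mono_set hint (ae_of_all _ fun x => by positivity)
          (Ioc_subset_Ioc hα hβ).eventuallyLE
    _ = ∫ x in (0:ℝ)..1, (|u x| / δ) ^ p x := (intervalIntegral.integral_of_le zero_le_one).symm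

lemma rpow_one_div_mul_le_of_integral_le_one {α β c δ : ℝ} (hu : ContinuousOn u (Icc 0 1))
    (hp : Measurable p) (hpm : 0 < pm) (hpl : ∀ t ∈ Icc (0:ℝ) 1, pm ≤ p t)
    (hpu : ∀ t ∈ Icc (0:ℝ) 1, p t ≤ pp) (hα : 0 ≤ α) (hβ : β ≤ 1) (hαβ : α ≤ β)
    (hc : ∀ t ∈ Icc α β, c ≤ |u t|) (hδ : 0 < δ)
    (h1 : ∫ x in (0:ℝ)..1, (|u x| / δ) ^ p x ≤ 1) :
    (β - α) ^ (1 / pm) * c ≤ δ := by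
  have hw0 : 0 ≤ (β - α) ^ (1 / pm) := by positivity
  have hw1 : (β - α) ^ (1 / pm) ≤ 1 :=
    Real.rpow_le_one (sub_nonneg.mpr hαβ) (by linarith) (by positivity)
  rcases le_or_gt c δ with hcδ | hδc
  · nlinarith
  have hmod := sub_mul_rpow_le_integral hα hβ hαβ hpm.le
    (fun t ht => hpl t (Icc_subset_Icc hα hβ ht)) hc hδ hδc.le
    (integrableOn_abs_div_rpow hu hp hpm hpl hpu hδ)
  have hpow : ((β - α) ^ (1 / pm) * (c / δ)) ^ pm ≤ 1 := by
    rw [Real.mul_rpow hw0 (div_pos (hδ.trans hδc) hδ).le, ← Real.rpow_mul (sub_nonneg.mpr hαβ),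
      one_div_mul_cancel hpm.ne', Real.rpow_one]
    linarith
  rw [← div_le_one hδ, mul_div_assoc]
  by_contra! hgt
  exact (Real.one_lt_rpow hgt hpm).not_ge hpow

theorem rpow_one_div_mul_le_luxNorm {α β c : ℝ} (hu : ContinuousOn u (Icc 0 1))
    (hp : Measurable p) (hpm : 0 < pm) (hpl : ∀ t ∈ Icc (0:ℝ) 1, pm ≤ p t)
    (hpu : ∀ t ∈ Icc (0:ℝ) 1, p t ≤ pp) (hα : 0 ≤ α) (hβ : β ≤ 1) (hαβ : α ≤ β)
    (hc : ∀ t ∈ Icc α β, c ≤ |u t|) :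
    (β - α) ^ (1 / pm) * c ≤ luxNorm p u := by
  refine le_csInf ⟨_, by linarith [supNorm_nonneg u],
    integral_abs_div_supNorm_add_one_rpow_le_one hu hp hpm hpl hpu⟩ ?_
  rintro δ ⟨hδ, h1⟩
  exact rpow_one_div_mul_le_of_integral_le_one hu hp hpm hpl hpu hα hβ hαβ hc hδ h1

end VariableExponent

theorem stmt7_general (u p b : ℝ → ℝ) (pm pp ρ α β η₀ : ℝ)
    (hb : MeasureTheory.IntegrableOn b (Set.Ioc (0:ℝ) 1))
    (hbnn : ∀ᵐ s ∂(MeasureTheory.volume.restrict (Set.Ioc (0:ℝ) 1)), 0 ≤ b s)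
    (hp : Measurable p) (hpm : 1 < pm)
    (hpl : ∀ t ∈ Set.Icc (0:ℝ) 1, pm ≤ p t)
    (hpu : ∀ t ∈ Set.Icc (0:ℝ) 1, p t ≤ pp)
    (hα : 0 ≤ α) (hαβ : α < β) (hβ : β ≤ 1)
    (hη : 0 < η₀)
    (hρ : 0 < ρ)
    (hu : ContinuousOn u (Set.Icc (0:ℝ) 1))
    (hthick : ∀ t ∈ Set.Icc α β, η₀ * supNorm u ≤ u t)
    (heq : (∫ s in (0:ℝ)..1, b (1 - s) * (u s) ^ (p s)) = ρ) :
    η₀ * (β - α) ^ (1 / pm) *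
      ((ρ / (∫ s in (0:ℝ)..1, b s)) ^ (1 / pp) +
        (if ρ / (∫ s in (0:ℝ)..1, b s) < 1 then
          (ρ / (∫ s in (0:ℝ)..1, b s)) ^ (1 / pm) -
            (ρ / (∫ s in (0:ℝ)..1, b s)) ^ (1 / pp)
         else 0)) ≤ luxNorm p u := by
  set B := ∫ s in (0:ℝ)..1, b s
  set M := supNorm u
  have h0 : (0:ℝ) ∈ Icc (0:ℝ) 1 := ⟨le_rfl, zero_le_one⟩
  have hpm0 : 0 < pm := by linarith
  have hint : IntervalIntegrable (fun s => b (1 - s) * u s ^ p s) volume 0 1 := by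
    by_contra hint
    rw [intervalIntegral.integral_undef hint] at heq
    exact hρ.ne heq
  have hρK : ρ ≤ max (M ^ pm) (M ^ pp) * B :=
    heq ▸ integral_comp_one_sub_mul_rpow_le hb hbnn hu hpm0 hpl hpu hint
  have hB : 0 < B := pos_of_mul_pos_right (hρ.trans_le hρK)
    (le_max_of_le_left (Real.rpow_nonneg (supNorm_nonneg u) pm))
  have hbracket : (ρ / B) ^ (1 / pp) +
      (if ρ / B < 1 then (ρ / B) ^ (1 / pm) - (ρ / B) ^ (1 / pp) else 0) ≤ M := by
    convert Real.ite_rpow_one_div_le_of_le_max_rpow (div_pos hρ hB) (supNorm_nonneg u) hpm0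
      ((hpl 0 h0).trans (hpu 0 h0)) ((div_le_iff₀ hB).2 hρK) using 1
    split_ifs <;> ring
  calc _ ≤ η₀ * (β - α) ^ (1 / pm) * M := mul_le_mul_of_nonneg_left hbracket (by positivity)
    _ = (β - α) ^ (1 / pm) * (η₀ * M) := by ring
    _ ≤ luxNorm p u := rpow_one_div_mul_le_luxNorm hu hp hpm0 hpl hpu hα hβ hαβ.le
        fun t ht => (hthick t ht).trans (le_abs_self _)

theorem stmt7 (u p b : ℝ → ℝ) (pm pp ρ α β η₀ : ℝ)
    (hb : MeasureTheory.IntegrableOn b (Set.Ioc (0:ℝ) 1))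
    (hbnn : ∀ᵐ s ∂(MeasureTheory.volume.restrict (Set.Ioc (0:ℝ) 1)), 0 ≤ b s)
    (hp : Measurable p) (hpm : 1 < pm)
    (hpl : ∀ t ∈ Set.Icc (0:ℝ) 1, pm ≤ p t)
    (hpu : ∀ t ∈ Set.Icc (0:ℝ) 1, p t ≤ pp)
    (hα : 0 ≤ α) (hαβ : α < β) (hβ : β ≤ 1)
    (hη : 0 < η₀) (hη1 : η₀ ≤ 1)
    (hρ : 0 < ρ)
    (hu : ContinuousOn u (Set.Icc (0:ℝ) 1))
    (hpos : ∀ t ∈ Set.Icc (0:ℝ) 1, 0 ≤ u t)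
    (hthick : ∀ t ∈ Set.Icc α β, η₀ * supNorm u ≤ u t)
    (heq : (∫ s in (0:ℝ)..1, b (1 - s) * (u s) ^ (p s)) = ρ) :
    η₀ * (β - α) ^ (1 / pm) *
      ((ρ / (∫ s in (0:ℝ)..1, b s)) ^ (1 / pp) +
        (if ρ / (∫ s in (0:ℝ)..1, b s) < 1 then
          (ρ / (∫ s in (0:ℝ)..1, b s)) ^ (1 / pm) -
            (ρ / (∫ s in (0:ℝ)..1, b s)) ^ (1 / pp)
         else 0)) ≤ luxNorm p u :=
  stmt7_general u p b pm pp ρ α β η₀ hb hbnn hp hpm hpl hpu hα hαβ hβ hη hρ hu hthick heq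
end

section
/- Let p ∈ (1,∞) be a constant exponent, C₀ ∈ (0,1), η₀ ∈ (0,1], and 0 ≤ α < β ≤ 1 with β−α < C₀. Then there exists a continuous function u:[0,1]→[0,∞) such that min_{t∈[α,β]} u(t) ≥ η₀‖u‖_∞ and ∫₀¹ u(t) dt ≥ C₀‖u‖_{L^p}, but ∫₀¹ u(t) dt < C₀‖u‖_∞; i.e. the hybrid cone strictly contains the sup-norm cone. -/
/-!
Take a trapezoid `u` with values in `[0, 1]`, equal to `1` on `[α, β]`, so that `‖u‖_∞ = 1`. Since
`u ^ p ≤ u`, we have `C₀ ‖u‖_p ≤ C₀ (∫ u) ^ (1/p)`, which is at most `∫ u` as soon as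
`∫ u ≥ C₀ ^ (p/(p-1))`. As `C₀ ^ (p/(p-1)) < C₀` and `β - α < C₀`, lifting the trapezoid by a
constant floor and making its ramps steep places `∫ u` in `[max (C₀ ^ (p/(p-1))) (β - α), C₀)`.
-/

open MeasureTheory Set

noncomputable def plateauBump (α β ε t : ℝ) : ℝ :=
  max 0 (min 1 (1 - max (α - t) (t - β) / ε))

namespace plateauBump

variable {α β ε : ℝ}

theorem continuous (α β ε : ℝ) : Continuous (plateauBump α β ε) := by
  unfold plateauBump; fun_prop

theorem nonneg (t : ℝ) : 0 ≤ plateauBump α β ε t := le_max_left _ _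

theorem le_one (t : ℝ) : plateauBump α β ε t ≤ 1 := max_le zero_le_one (min_le_left _ _)

theorem eq_one (hε : 0 ≤ ε) {t : ℝ} (ht : t ∈ Icc α β) : plateauBump α β ε t = 1 := by
  have : max (α - t) (t - β) / ε ≤ 0 :=
    div_nonpos_of_nonpos_of_nonneg (max_le (by linarith [ht.1]) (by linarith [ht.2])) hε
  rw [plateauBump, min_eq_left (by linarith), max_eq_right zero_le_one]

theorem le_indicator (hε : 0 < ε) (t : ℝ) :
    plateauBump α β ε t ≤ (Icc (α - ε) (β + ε)).indicator 1 t := by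
  by_cases ht : t ∈ Icc (α - ε) (β + ε)
  · simpa [indicator_of_mem ht] using le_one t
  · have : ε ≤ max (α - t) (t - β) := by
      rw [mem_Icc, not_and_or, not_le, not_le] at ht
      rcases ht with h | h
      · exact le_max_of_le_left (by linarith)
      · exact le_max_of_le_right (by linarith)
    have : 1 - max (α - t) (t - β) / ε ≤ 0 := by
      linarith [(one_le_div hε).2 this]
    rw [indicator_of_notMem ht, plateauBump, min_eq_right (by linarith), max_eq_left this]

theorem sub_le_integral (hα : 0 ≤ α) (hαβ : α ≤ β) (hβ : β ≤ 1) (hε : 0 ≤ ε) :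
    β - α ≤ ∫ t in (0:ℝ)..1, plateauBump α β ε t := by
  calc β - α = ∫ t in α..β, plateauBump α β ε t := by
        rw [intervalIntegral.integral_congr (g := fun _ => (1:ℝ)), intervalIntegral.integral_const,
          smul_eq_mul, mul_one]
        intro t ht
        rw [uIcc_of_le hαβ] at ht
        exact eq_one hε ht
    _ ≤ ∫ t in (0:ℝ)..1, plateauBump α β ε t :=
        intervalIntegral.integral_mono_interval hα hαβ hβ (ae_of_all _ nonneg)
          ((continuous α β ε).intervalIntegrable 0 1)

theorem integral_le_sub_add (hαβ : α ≤ β) (hε : 0 < ε) :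
    ∫ t in (0:ℝ)..1, plateauBump α β ε t ≤ β - α + 2 * ε := by
  rw [intervalIntegral.integral_of_le zero_le_one]
  calc ∫ t in Ioc (0:ℝ) 1, plateauBump α β ε t
      ≤ ∫ t in Ioc (0:ℝ) 1, (Icc (α - ε) (β + ε)).indicator 1 t :=
        setIntegral_mono ((continuous α β ε).integrableOn_Icc.mono_set Ioc_subset_Icc_self)
          ((integrable_indicator_iff measurableSet_Icc).2
            (integrableOn_const measure_Icc_lt_top.ne (by simp))).integrableOn
          (le_indicator hε)
    _ = volume.real (Icc (α - ε) (β + ε) ∩ Ioc 0 1) := by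
        rw [integral_indicator_one measurableSet_Icc, measureReal_restrict_apply measurableSet_Icc]
    _ ≤ volume.real (Icc (α - ε) (β + ε)) :=
        measureReal_mono inter_subset_left measure_Icc_lt_top.ne
    _ = β - α + 2 * ε := by rw [Real.volume_real_Icc_of_le (by linarith)]; ring

end plateauBump

theorem exists_continuous_plateau_integral_mem_Ico {α β m M : ℝ} (hα : 0 ≤ α) (hαβ : α ≤ β)
    (hβ : β ≤ 1) (hm : β - α ≤ m) (hmM : m < M) (hM : M ≤ 1) :
    ∃ u : ℝ → ℝ, Continuous u ∧ (∀ t, u t ∈ Icc 0 1) ∧ EqOn u 1 (Icc α β) ∧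
      (∫ t in (0:ℝ)..1, u t) ∈ Ico m M := by
  -- the floor `c` is chosen so that `c + (1 - c) * (β - α) = m`
  set c := (m - (β - α)) / (1 - (β - α))
  have hc0 : 0 ≤ c := div_nonneg (by linarith) (by linarith)
  have hc1 : c ≤ 1 := (div_le_one (by linarith)).2 (by linarith)
  have hcm : c + (1 - c) * (β - α) = m := by
    have : c * (1 - (β - α)) = m - (β - α) := div_mul_cancel₀ _ (by linarith)
    linarith
  obtain ⟨ε, hε, hεM⟩ : ∃ ε, 0 < ε ∧ m + 2 * ε < M := ⟨(M - m) / 4, by linarith, by linarith⟩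
  have hg := plateauBump.continuous α β ε
  have hint : ∫ t in (0:ℝ)..1, c + (1 - c) * plateauBump α β ε t =
      c + (1 - c) * ∫ t in (0:ℝ)..1, plateauBump α β ε t := by
    rw [intervalIntegral.integral_add intervalIntegrable_const
        ((hg.intervalIntegrable 0 1).const_mul _),
      intervalIntegral.integral_const_mul, intervalIntegral.integral_const]
    simp
  refine ⟨fun t => c + (1 - c) * plateauBump α β ε t,
    continuous_const.add (continuous_const.mul hg), fun t => ?_, fun t ht => ?_, ?_⟩
  · have h0 : 0 ≤ plateauBump α β ε t := plateauBump.nonneg t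
    have h1 : plateauBump α β ε t ≤ 1 := plateauBump.le_one t
    constructor <;> nlinarith
  · simp [plateauBump.eq_one hε.le ht]
  · have hlow := plateauBump.sub_le_integral hα hαβ hβ hε.le
    have hup := plateauBump.integral_le_sub_add hαβ hε
    rw [hint, mem_Ico]
    constructor
    · nlinarith
    · nlinarith [mul_le_mul_of_nonneg_left hup (sub_nonneg.2 hc1), mul_nonneg hc0 hε.le]

theorem mul_rpow_one_div_le {p C P J : ℝ} (hp : 1 < p) (hC : 0 < C) (hP : 0 ≤ P) (hPJ : P ≤ J)
    (hCJ : C ^ (p / (p - 1)) ≤ J) : C * P ^ (1 / p) ≤ J := by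
  have hp0 : 0 < p := by linarith
  have hJ : 0 < J := (Real.rpow_pos_of_pos hC _).trans_le hCJ
  have hC_le : C ≤ J ^ ((p - 1) / p) := by
    calc C = (C ^ (p / (p - 1))) ^ ((p - 1) / p) := by
          rw [← Real.rpow_mul hC.le, div_mul_div_cancel₀ (by linarith), div_self hp0.ne',
            Real.rpow_one]
      _ ≤ J ^ ((p - 1) / p) := Real.rpow_le_rpow (by positivity) hCJ (by
          apply div_nonneg <;> linarith)
  calc C * P ^ (1 / p) ≤ J ^ ((p - 1) / p) * J ^ (1 / p) := by
        gcongr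
    _ = J := by rw [← Real.rpow_add hJ, ← add_div, sub_add_cancel, div_self hp0.ne', Real.rpow_one]

theorem supNorm_eq_one {u : ℝ → ℝ} (hu : ∀ t ∈ Icc (0:ℝ) 1, u t ∈ Icc 0 1)
    (h : ∃ t ∈ Icc (0:ℝ) 1, u t = 1) : supNorm u = 1 := by
  refine IsGreatest.csSup_eq ⟨?_, ?_⟩
  · obtain ⟨t, ht, h1⟩ := h
    exact ⟨t, ht, by simp [h1]⟩
  · rintro _ ⟨t, ht, rfl⟩
    show |u t| ≤ 1
    rw [abs_of_nonneg (hu t ht).1]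
    exact (hu t ht).2

theorem stmt14_general (pc α β η₀ C₀ : ℝ)
    (hpc : 1 < pc)
    (hC : 0 < C₀) (hC1 : C₀ < 1)
    (hη1 : η₀ ≤ 1)
    (hα : 0 ≤ α) (hαβ : α < β) (hβ : β ≤ 1)
    (hgap : β - α < C₀) :
    ∃ u : ℝ → ℝ, ContinuousOn u (Set.Icc (0:ℝ) 1)
      ∧ (∀ t ∈ Set.Icc (0:ℝ) 1, 0 ≤ u t)
      ∧ (∀ t ∈ Set.Icc α β, η₀ * supNorm u ≤ u t)
      ∧ C₀ * (∫ t in (0:ℝ)..1, (u t) ^ pc) ^ (1 / pc) ≤ ∫ t in (0:ℝ)..1, u t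
      ∧ (∫ t in (0:ℝ)..1, u t) < C₀ * supNorm u := by
  have hCq : C₀ ^ (pc / (pc - 1)) < C₀ :=
    Real.rpow_lt_self_of_lt_one hC hC1 ((one_lt_div (by linarith)).2 (by linarith))
  obtain ⟨u, hu_cont, hu_mem, hu_one, hJ_low, hJ_up⟩ :=
    exists_continuous_plateau_integral_mem_Ico hα hαβ.le hβ
      (le_max_right (C₀ ^ (pc / (pc - 1))) _) (max_lt hCq hgap) hC1.le
  have hsup : supNorm u = 1 :=
    supNorm_eq_one (fun t _ => hu_mem t) ⟨α, ⟨hα, hαβ.le.trans hβ⟩, hu_one ⟨le_rfl, hαβ.le⟩⟩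
  have hpow_le : ∫ t in (0:ℝ)..1, u t ^ pc ≤ ∫ t in (0:ℝ)..1, u t :=
    intervalIntegral.integral_mono_on zero_le_one
      ((hu_cont.rpow_const fun t => Or.inr (by linarith)).intervalIntegrable 0 1)
      (hu_cont.intervalIntegrable 0 1)
      fun t _ => Real.rpow_le_self_of_le_one (hu_mem t).1 (hu_mem t).2 hpc.le
  have hpow_nonneg : 0 ≤ ∫ t in (0:ℝ)..1, u t ^ pc :=
    intervalIntegral.integral_nonneg zero_le_one fun t _ => Real.rpow_nonneg (hu_mem t).1 _
  refine ⟨u, hu_cont.continuousOn, fun t _ => (hu_mem t).1, fun t ht => ?_,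
    mul_rpow_one_div_le hpc hC hpow_nonneg hpow_le ((le_max_left _ _).trans hJ_low), ?_⟩
  · rw [hsup, mul_one, hu_one ht]
    exact hη1
  · rwa [hsup, mul_one]

theorem stmt14 (pc α β η₀ C₀ : ℝ)
    (hpc : 1 < pc)
    (hC : 0 < C₀) (hC1 : C₀ < 1)
    (hη : 0 < η₀) (hη1 : η₀ ≤ 1)
    (hα : 0 ≤ α) (hαβ : α < β) (hβ : β ≤ 1)
    (hgap : β - α < C₀) :
    ∃ u : ℝ → ℝ, ContinuousOn u (Set.Icc (0:ℝ) 1)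
      ∧ (∀ t ∈ Set.Icc (0:ℝ) 1, 0 ≤ u t)
      ∧ (∀ t ∈ Set.Icc α β, η₀ * supNorm u ≤ u t)
      ∧ C₀ * (∫ t in (0:ℝ)..1, (u t) ^ pc) ^ (1 / pc) ≤ ∫ t in (0:ℝ)..1, u t
      ∧ (∫ t in (0:ℝ)..1, u t) < C₀ * supNorm u :=
  stmt14_general pc α β η₀ C₀ hpc hC hC1 hη1 hα hαβ hβ hgap
end
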